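/- In the q-shuffle algebra V, for k,ℓ ∈ ℕ: [G_k, G̃_{ℓ+1}]_⋆ − [G_ℓ, G̃_{k+1}]_⋆ = q[W_{−ℓ}, W_{k+1}]_{q,⋆} − q[W_{−k}, W_{ℓ+1}]_{q,⋆}, where [a,b]_⋆ = a⋆b − b⋆a and [a,b]_{q,⋆} = q a⋆b − q⁻¹ b⋆a. -/
import Mathlib


noncomputable section

/-- Words in the letters `x` (= `false`) and `y` (= `true`). -/
abbrev Wd := List Bool

/-- The underlying vector space of the free algebra `F⟨x,y⟩`,
with the words as a basis. -/
abbrev V (F : Type*) [Field F] := Wd →₀ F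

/-- The pairing `⟨u,v⟩` on letters: `2` if equal, `-2` if distinct. -/
def pr (a b : Bool) : ℤ := if a = b then 2 else -2

/-- `⟨u₁,b⟩ + ⟨u₂,b⟩ + ⋯ + ⟨u_r,b⟩` for a word `u` and a letter `b`. -/
def wsum (u : Wd) (b : Bool) : ℤ := (u.map fun a => pr a b).sum

variable {F : Type*} [Field F]

/-- Left multiplication by a letter, in the free (concatenation) algebra. -/
def lmul (a : Bool) (f : V F) : V F := Finsupp.mapDomain (fun w => a :: w) f

/-- The `q`-shuffle product of two words (as an element of `V F`), defined by
Rosso's recursion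
`u ⋆ v = u₁((u₂⋯u_r) ⋆ v) + q^{⟨u₁,v₁⟩+⋯+⟨u_r,v₁⟩} v₁(u ⋆ (v₂⋯v_s))`. -/
def sh (q : F) : Wd → Wd → V F
  | [], v => Finsupp.single v 1
  | u@(_ :: _), [] => Finsupp.single u 1
  | a :: u', b :: v' =>
      lmul a (sh q u' (b :: v')) +
        q ^ wsum (a :: u') b • lmul b (sh q (a :: u') v')
  termination_by u v => u.length + v.length
  decreasing_by all_goals (simp only [List.length_cons]; omega)

/-- The `q`-shuffle product on `V F`, extended bilinearly from words. -/
def st (q : F) (f g : V F) : V F :=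
  f.sum fun u cu => g.sum fun v cv => (cu * cv) • sh q u v

/-- The concatenation (free-algebra) product on `V F`. -/
def cm (f g : V F) : V F :=
  f.sum fun u cu => g.sum fun v cv => Finsupp.single (u ++ v) (cu * cv)

/-- Powers with respect to the concatenation product. -/
def cpow (f : V F) : ℕ → V F
  | 0 => Finsupp.single [] 1
  | n + 1 => cm f (cpow f n)

/-- The alternating word `W_{-k} = xyx⋯x` of length `2k+1`. -/
def altX : ℕ → Wd
  | 0 => [false]
  | k + 1 => false :: true :: altX k

/-- The alternating word `W_{k+1} = yxy⋯y` of length `2k+1`. -/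
def altY : ℕ → Wd
  | 0 => [true]
  | k + 1 => true :: false :: altY k

/-- The alternating word `G_k = (yx)^k`. -/
def gw : ℕ → Wd
  | 0 => []
  | k + 1 => true :: false :: gw k

/-- The alternating word `G̃_k = (xy)^k`. -/
def gtw : ℕ → Wd
  | 0 => []
  | k + 1 => false :: true :: gtw k

/-- `W_{-k}` as an element of `V F`. -/
def Wm (F : Type*) [Field F] (k : ℕ) : V F := Finsupp.single (altX k) 1

/-- `W_{k+1}` as an element of `V F`. -/
def Wp (F : Type*) [Field F] (k : ℕ) : V F := Finsupp.single (altY k) 1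

/-- `G_k` as an element of `V F`. -/
def Gn (F : Type*) [Field F] (k : ℕ) : V F := Finsupp.single (gw k) 1

/-- `G̃_k` as an element of `V F`. -/
def Gt (F : Type*) [Field F] (k : ℕ) : V F := Finsupp.single (gtw k) 1

-- === auxiliary lemmas ===
lemma altX_eq (k : ℕ) : altX k = false :: gw k := by
  induction k with
  | zero => rfl
  | succ k ih => rw [altX, gw, ih]
lemma altY_eq (k : ℕ) : altY k = true :: gtw k := by
  induction k with
  | zero => rfl
  | succ k ih => rw [altY, gtw, ih]
lemma gw_succ (k : ℕ) : gw (k+1) = true :: altX k := by rw [gw, altX_eq]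
lemma gtw_succ (k : ℕ) : gtw (k+1) = false :: altY k := by rw [gtw, altY_eq]

lemma wsum_cons (a b : Bool) (u : Wd) : wsum (a :: u) b = pr a b + wsum u b := by
  simp [wsum]
lemma wsum_gw (k : ℕ) (b : Bool) : wsum (gw k) b = 0 := by
  induction k with
  | zero => rfl
  | succ k ih => rw [gw, wsum_cons, wsum_cons, ih]; cases b <;> simp [pr]
lemma wsum_gtw (k : ℕ) (b : Bool) : wsum (gtw k) b = 0 := by
  induction k with
  | zero => rfl
  | succ k ih => rw [gtw, wsum_cons, wsum_cons, ih]; cases b <;> simp [pr]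
lemma wsum_altX (k : ℕ) (b : Bool) : wsum (altX k) b = pr false b := by
  rw [altX_eq, wsum_cons, wsum_gw, add_zero]
lemma wsum_altY (k : ℕ) (b : Bool) : wsum (altY k) b = pr true b := by
  rw [altY_eq, wsum_cons, wsum_gtw, add_zero]

lemma lmul_add (a : Bool) (f g : V F) : lmul a (f + g) = lmul a f + lmul a g :=
  Finsupp.mapDomain_add
lemma lmul_smul (a : Bool) (c : F) (f : V F) : lmul a (c • f) = c • lmul a f :=
  Finsupp.mapDomain_smul c f
lemma lmul_zero (a : Bool) : lmul a (0 : V F) = 0 := Finsupp.mapDomain_zero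
lemma lmul_neg (a : Bool) (f : V F) : lmul a (-f) = - lmul a f := by
  rw [← neg_one_smul F f, lmul_smul, neg_one_smul]
lemma lmul_sub (a : Bool) (f g : V F) : lmul a (f - g) = lmul a f - lmul a g := by
  rw [sub_eq_add_neg, lmul_add, lmul_neg, sub_eq_add_neg]
lemma lmul_single (a : Bool) (w : Wd) (c : F) :
    lmul a (Finsupp.single w c) = Finsupp.single (a :: w) c :=
  Finsupp.mapDomain_single

lemma sh_nil_l (q : F) (v : Wd) : sh q [] v = Finsupp.single v 1 := by rw [sh]
lemma sh_nil_r (q : F) (u : Wd) : sh q u [] = Finsupp.single u 1 := by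
  cases u <;> rw [sh]
lemma sh_cons (q : F) (a b : Bool) (u v : Wd) :
    sh q (a :: u) (b :: v) = lmul a (sh q u (b :: v)) +
      q ^ wsum (a :: u) b • lmul b (sh q (a :: u) v) := by rw [sh]

lemma q_zpow_two (q : F) : q ^ (2:ℤ) = q^2 := by
  rw [show (2:ℤ) = ((2:ℕ):ℤ) from rfl, zpow_natCast]
lemma q_zpow_neg_two (q : F) : q ^ (-2:ℤ) = (q^2)⁻¹ := by
  rw [zpow_neg, q_zpow_two]

-- step lemmas
lemma E1 (q : F) (k m : ℕ) : sh q (gw (k+1)) (gtw (m+1)) =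
    lmul true (sh q (altX k) (gtw (m+1))) + lmul false (sh q (gw (k+1)) (altY m)) := by
  conv_lhs => rw [gw_succ, gtw_succ, sh_cons]
  rw [← gw_succ, ← gtw_succ, wsum_gw]
  norm_num
lemma E2 (q : F) (k m : ℕ) : sh q (altX k) (gtw (m+1)) =
    lmul false (sh q (gw k) (gtw (m+1))) + q^2 • lmul false (sh q (altX k) (altY m)) := by
  conv_lhs => rw [altX_eq, gtw_succ, sh_cons]
  rw [← altX_eq, ← gtw_succ, wsum_altX, show pr false false = 2 from rfl, q_zpow_two]
lemma E3 (q : F) (k m : ℕ) : sh q (gw (k+1)) (altY m) =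
    lmul true (sh q (altX k) (altY m)) + lmul true (sh q (gw (k+1)) (gtw m)) := by
  conv_lhs => rw [gw_succ, altY_eq, sh_cons]
  rw [← gw_succ, ← altY_eq, wsum_gw]
  norm_num
lemma E4 (q : F) (k m : ℕ) : sh q (altX k) (altY m) =
    lmul false (sh q (gw k) (altY m)) + (q^2)⁻¹ • lmul true (sh q (altX k) (gtw m)) := by
  conv_lhs => rw [altX_eq, altY_eq, sh_cons]
  rw [← altX_eq, ← altY_eq, wsum_altX, show pr false true = -2 from rfl, q_zpow_neg_two]
lemma G1s (q : F) (k m : ℕ) : sh q (gtw (m+1)) (gw (k+1)) =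
    lmul false (sh q (altY m) (gw (k+1))) + lmul true (sh q (gtw (m+1)) (altX k)) := by
  conv_lhs => rw [gtw_succ, gw_succ, sh_cons]
  rw [← gtw_succ, ← gw_succ, wsum_gtw]
  norm_num
lemma G2s (q : F) (k m : ℕ) : sh q (altY m) (gw (k+1)) =
    lmul true (sh q (gtw m) (gw (k+1))) + q^2 • lmul true (sh q (altY m) (altX k)) := by
  conv_lhs => rw [altY_eq, gw_succ, sh_cons]
  rw [← altY_eq, ← gw_succ, wsum_altY, show pr true true = 2 from rfl, q_zpow_two]
lemma G3s (q : F) (k m : ℕ) : sh q (gtw (m+1)) (altX k) =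
    lmul false (sh q (altY m) (altX k)) + lmul false (sh q (gtw (m+1)) (gw k)) := by
  conv_lhs => rw [gtw_succ, altX_eq, sh_cons]
  rw [← gtw_succ, ← altX_eq, wsum_gtw]
  norm_num
lemma G4s (q : F) (k m : ℕ) : sh q (altY m) (altX k) =
    lmul true (sh q (gtw m) (altX k)) + (q^2)⁻¹ • lmul false (sh q (altY m) (gw k)) := by
  conv_lhs => rw [altY_eq, altX_eq, sh_cons]
  rw [← altY_eq, ← altX_eq, wsum_altY, show pr true false = -2 from rfl, q_zpow_neg_two]

lemma sh_gw0_l (q : F) (v : Wd) : sh q (gw 0) v = Finsupp.single v 1 := by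
  rw [show gw 0 = [] from rfl, sh_nil_l]
lemma sh_gw0_r (q : F) (u : Wd) : sh q u (gw 0) = Finsupp.single u 1 := by
  rw [show gw 0 = [] from rfl, sh_nil_r]
lemma sh_gtw0_l (q : F) (v : Wd) : sh q (gtw 0) v = Finsupp.single v 1 := by
  rw [show gtw 0 = [] from rfl, sh_nil_l]
lemma sh_gtw0_r (q : F) (u : Wd) : sh q u (gtw 0) = Finsupp.single u 1 := by
  rw [show gtw 0 = [] from rfl, sh_nil_r]

lemma single_altX (k : ℕ) :
    (Finsupp.single (altX k) (1:F)) = lmul false (Finsupp.single (gw k) 1) := by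
  rw [altX_eq, lmul_single]
lemma single_altY (k : ℕ) :
    (Finsupp.single (altY k) (1:F)) = lmul true (Finsupp.single (gtw k) 1) := by
  rw [altY_eq, lmul_single]
lemma single_gw_succ (k : ℕ) :
    (Finsupp.single (gw (k+1)) (1:F)) = lmul true (Finsupp.single (altX k) 1) := by
  rw [gw_succ, lmul_single]
lemma single_gtw_succ (k : ℕ) :
    (Finsupp.single (gtw (k+1)) (1:F)) = lmul false (Finsupp.single (altY k) 1) := by
  rw [gtw_succ, lmul_single]

def Th (q : F) (k l : ℕ) : V F :=
  sh q (gw k) (gtw (l+1)) - sh q (gtw (l+1)) (gw k)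
  - sh q (gw l) (gtw (k+1)) + sh q (gtw (k+1)) (gw l)
  + q^2 • sh q (altX k) (altY l) - q^2 • sh q (altX l) (altY k)
  + sh q (altY k) (altX l) - sh q (altY l) (altX k)

def Ph (q : F) (k l : ℕ) : V F :=
  (1+q^2) • (sh q (gw k) (altY l) - sh q (gw l) (altY k))
  + (1+(q^2)⁻¹) • (sh q (altY k) (gw l) - sh q (altY l) (gw k))

lemma M4 (q : F) (hq : q ≠ 0) (k : ℕ) :
    Ph q (k+1) 0 = lmul true (lmul false (Ph q k 0)) := by
  simp only [Ph, E1, E2, E3, E4, G1s, G2s, G3s, G4s, sh_gw0_l, sh_gw0_r, sh_gtw0_l, sh_gtw0_r,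
    single_altX, single_altY, single_gw_succ, single_gtw_succ,
    lmul_add, lmul_sub, lmul_smul, lmul_neg, lmul_zero]
  match_scalars <;> ((try field_simp) <;> (try ring1) <;> (try (left; ring1)))

lemma M3 (q : F) (hq : q ≠ 0) (k : ℕ) :
    Th q (k+1) 0 = lmul false (Ph q (k+1) 0) + lmul true (lmul false (Th q k 0)) := by
  simp only [Th, Ph, E1, E2, E3, E4, G1s, G2s, G3s, G4s, sh_gw0_l, sh_gw0_r, sh_gtw0_l,
    sh_gtw0_r, single_altX, single_altY, single_gw_succ, single_gtw_succ,
    lmul_add, lmul_sub, lmul_smul, lmul_neg, lmul_zero]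
  match_scalars <;> ((try field_simp) <;> (try ring1) <;> (try (left; ring1)))

lemma M1 (q : F) (hq : q ≠ 0) (k l : ℕ) :
    Th q (k+1) (l+1) = lmul false (Ph q (k+1) (l+1))
      + lmul true (lmul false (Th q k (l+1))) + lmul true (lmul false (Th q (k+1) l)) := by
  simp only [Th, Ph, E1, E2, E3, E4, G1s, G2s, G3s, G4s, sh_gw0_l, sh_gw0_r, sh_gtw0_l,
    sh_gtw0_r, single_altX, single_altY, single_gw_succ, single_gtw_succ,
    lmul_add, lmul_sub, lmul_smul, lmul_neg, lmul_zero]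
  match_scalars <;> ((try field_simp) <;> (try ring1) <;> (try (left; ring1)))

lemma M2 (q : F) (hq : q ≠ 0) (k l : ℕ) :
    Ph q (k+1) (l+1) = lmul true (lmul false (Ph q k (l+1)))
      + lmul true (lmul false (Ph q (k+1) l))
      + ((1+q^2)*(1+(q^2)⁻¹)) • lmul true (lmul true (lmul false (Th q k l))) := by
  simp only [Th, Ph, E1, E2, E3, E4, G1s, G2s, G3s, G4s, sh_gw0_l, sh_gw0_r, sh_gtw0_l,
    sh_gtw0_r, single_altX, single_altY, single_gw_succ, single_gtw_succ,
    lmul_add, lmul_sub, lmul_smul, lmul_neg, lmul_zero]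
  match_scalars <;> ((try field_simp) <;> (try ring1) <;> (try (left; ring1)))

lemma Th_anti (q : F) (k l : ℕ) : Th q k l = - Th q l k := by
  simp only [Th]; module

lemma row0 (q : F) (hq : q ≠ 0) : ∀ k, Th q k 0 = 0 ∧ Ph q k 0 = 0 := by
  intro k
  induction k with
  | zero =>
    constructor
    · simp only [Th]; module
    · simp only [Ph]; module
  | succ k ih =>
    have hP : Ph q (k+1) 0 = 0 := by rw [M4 q hq k, ih.2, lmul_zero, lmul_zero]
    refine ⟨?_, hP⟩
    rw [M3 q hq k, hP, ih.1]
    simp only [lmul_zero, add_zero]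

lemma main_zero (q : F) (hq : q ≠ 0) : ∀ k l, Th q k l = 0 ∧ Ph q k l = 0 := by
  intro k
  induction k with
  | zero =>
    intro l
    constructor
    · rw [Th_anti, (row0 q hq l).1, neg_zero]
    · have : Ph q 0 l = - Ph q l 0 := by simp only [Ph]; module
      rw [this, (row0 q hq l).2, neg_zero]
  | succ k ih =>
    intro l
    induction l with
    | zero => exact row0 q hq (k+1)
    | succ l ihl =>
      have hP : Ph q (k+1) (l+1) = 0 := by
        rw [M2 q hq k l, (ih (l+1)).2, ihl.2, (ih l).1]
        simp only [lmul_zero, smul_zero, add_zero]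
      refine ⟨?_, hP⟩
      rw [M1 q hq k l, hP, (ih (l+1)).1, ihl.1]
      simp only [lmul_zero, add_zero]

lemma st_single (q : F) (u v : Wd) :
    st q (Finsupp.single u (1:F)) (Finsupp.single v 1) = sh q u v := by
  rw [st, Finsupp.sum_single_index, Finsupp.sum_single_index] <;> simp [Finsupp.sum_single_index]

/-- `[G_k, G̃_{ℓ+1}] − [G_ℓ, G̃_{k+1}] = q[W_{−ℓ}, W_{k+1}]_q − q[W_{−k}, W_{ℓ+1}]_q`. -/
theorem stmt_14 {F : Type*} [Field F] (q : F) (hq : q ≠ 0)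
    (hq' : ∀ n : ℕ, 0 < n → q ^ n ≠ 1) (k l : ℕ) :
    (st q (Gn F k) (Gt F (l + 1)) - st q (Gt F (l + 1)) (Gn F k))
      - (st q (Gn F l) (Gt F (k + 1)) - st q (Gt F (k + 1)) (Gn F l))
    = q • (q • st q (Wm F l) (Wp F k) - q⁻¹ • st q (Wp F k) (Wm F l))
      - q • (q • st q (Wm F k) (Wp F l) - q⁻¹ • st q (Wp F l) (Wm F k)) := by
  have h := (main_zero q hq k l).1
  simp only [Gn, Gt, Wm, Wp, st_single]
  rw [← sub_eq_zero]
  have key : (sh q (gw k) (gtw (l+1)) - sh q (gtw (l+1)) (gw k))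
      - (sh q (gw l) (gtw (k+1)) - sh q (gtw (k+1)) (gw l))
      - (q • (q • sh q (altX l) (altY k) - q⁻¹ • sh q (altY k) (altX l))
        - q • (q • sh q (altX k) (altY l) - q⁻¹ • sh q (altY l) (altX k))) = Th q k l := by
    simp only [Th]
    match_scalars <;> (field_simp; try ring)
  rw [key]
  exact h
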